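/- For finite information structures u, v on K × C × D: sup over zero-sum payoff functions g of (val(v,g) − val(u,g)) equals inf over pairs (u', v') of finite information structures with u' ⪯ u and v' ⪰ v of ‖u' − v'‖₁, where ⪯ is the comparison 'player 1 weakly prefers in every zero-sum game' (equivalently, existence of garblings as in the Blackwell-type characterization). -/

import Mathlib

open scoped BigOperators

noncomputable section

/-- A probability distribution on a finite type, given as a nonnegative function summing to 1. -/
def IsDist {α : Type*} [Fintype α] (u : α → ℝ) : Prop :=
  (∀ a, 0 ≤ u a) ∧ ∑ a, u a = 1

/-- A garbling (stochastic map / behavioral strategy). -/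
def IsKernel {α β : Type*} [Fintype β] (q : α → β → ℝ) : Prop :=
  ∀ a, IsDist (q a)

/-- Expected payoff in the zero-sum Bayesian game `Γ(u,g)` when players use
behavioral strategies `σ` and `τ`. -/
def pay {K C D I J : Type*} [Fintype K] [Fintype C] [Fintype D] [Fintype I] [Fintype J]
    (u : K × C × D → ℝ) (g : K → I → J → ℝ) (σ : C → I → ℝ) (τ : D → J → ℝ) : ℝ :=
  ∑ k, ∑ c, ∑ d, ∑ i, ∑ j, u (k, c, d) * σ c i * τ d j * g k i j

/-- The value (maxmin) of the zero-sum Bayesian game `Γ(u,g)`, player 1 maximizing. -/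
def gameVal {K C D I J : Type*} [Fintype K] [Fintype C] [Fintype D] [Fintype I] [Fintype J]
    (u : K × C × D → ℝ) (g : K → I → J → ℝ) : ℝ :=
  sSup {x : ℝ | ∃ σ : C → I → ℝ, IsKernel σ ∧
    x = sInf {y : ℝ | ∃ τ : D → J → ℝ, IsKernel τ ∧ y = pay u g σ τ}}

/-- Garbling of player 1's signal: `(q.u)(k,c,d) = ∑ c', u(k,c',d) q(c|c')`. -/
def garbleL {K C C' D : Type*} [Fintype C] (q : C → C' → ℝ) (u : K × C × D → ℝ) :
    K × C' × D → ℝ :=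
  fun x => ∑ c, u (x.1, c, x.2.2) * q c x.2.1

/-- Garbling of player 2's signal: `(u.q)(k,c,d) = ∑ d', u(k,c,d') q(d|d')`. -/
def garbleR {K C D D' : Type*} [Fintype D] (q : D → D' → ℝ) (u : K × C × D → ℝ) :
    K × C × D' → ℝ :=
  fun x => ∑ d, u (x.1, x.2.1, d) * q d x.2.2

/-- ℓ¹ distance. -/
def l1 {α : Type*} [Fintype α] (u v : α → ℝ) : ℝ := ∑ a, |u a - v a|

/-- Payoff functions bounded by 1. -/
def Bounded1 {K I J : Type*} (g : K → I → J → ℝ) : Prop := ∀ k i j, |g k i j| ≤ 1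

/-- The value-based distance: sup over all finite zero-sum games (with nonempty
finite action sets, payoffs bounded by 1) of the absolute difference of values. -/
def valueDist {K C D C' D' : Type*} [Fintype K] [Fintype C] [Fintype D] [Fintype C'] [Fintype D']
    (u : K × C × D → ℝ) (v : K × C' × D' → ℝ) : ℝ :=
  sSup {x : ℝ | ∃ (m n : ℕ) (g : K → Fin (m + 1) → Fin (n + 1) → ℝ),
    Bounded1 g ∧ x = |gameVal u g - gameVal v g|}

/-- Value of a single-agent decision problem on a single-agent information structure. -/
def val1 {K C I : Type*} [Fintype K] [Fintype C] [Fintype I] [Nonempty I]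
    (u : K × C → ℝ) (g : K → I → ℝ) : ℝ :=
  ∑ c, ⨆ i, ∑ k, u (k, c) * g k i

/-- The single-agent value-based distance. -/
def valueDist1 {K C C' : Type*} [Fintype K] [Fintype C] [Fintype C']
    (u : K × C → ℝ) (v : K × C' → ℝ) : ℝ :=
  sSup {x : ℝ | ∃ (m : ℕ) (g : K → Fin (m + 1) → ℝ),
    (∀ k i, |g k i| ≤ 1) ∧ x = |val1 u g - val1 v g|}

/-- Garbling of the signal in a single-agent structure. -/
def garble1 {K C C' : Type*} [Fintype C] (q : C → C' → ℝ) (u : K × C → ℝ) : K × C' → ℝ :=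
  fun x => ∑ c, u (x.1, c) * q c x.2

end

/-- `Pref u w` : player 1 weakly prefers `u` to `w` in every finite zero-sum game. -/
def Pref {K C D : Type*} [Fintype K] [Fintype C] [Fintype D]
    (u w : K × C × D → ℝ) : Prop :=
  ∀ (m n : ℕ) (g : K → Fin (m + 1) → Fin (n + 1) → ℝ), Bounded1 g →
    gameVal w g ≤ gameVal u g

/-!
The value of a game is monotone along `Pref` and 1-Lipschitz for the ℓ¹ distance, so every value
gap `val(v,g) - val(u,g)` is at most the right-hand side `δ`.

Conversely, since `q₁.u ⪯ u` and `v.q₂ ⪰ v`, the differences `q₁.u - v.q₂` over all garblings form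
a convex set of vectors of ℓ¹ norm at least `δ`. Separating it from the open ℓ¹-ball of radius `δ`
gives `g` with `|g| ≤ 1` and `⟪q₁.u - v.q₂, g⟫ ≥ δ` for all garblings. In the game where both
players report a signal and the payoff is `-g`, against a truthful opponent player 1 can do no
better than the best-reply report `ψ`, and player 2 no better than the best-reply report `φ`; so
the value gap of this game is at least `⟪ψ.u - v.φ, g⟫ ≥ δ`.
-/

open Finset

section Distributions

variable {α : Type*} [Fintype α]

lemma IsDist.sum_mul_le {p f : α → ℝ} {M : ℝ} (hp : IsDist p) (hf : ∀ a, f a ≤ M) :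
    ∑ a, p a * f a ≤ M :=
  calc ∑ a, p a * f a ≤ ∑ a, p a * M :=
        sum_le_sum fun a _ => mul_le_mul_of_nonneg_left (hf a) (hp.1 a)
    _ = M := by rw [← sum_mul, hp.2, one_mul]

lemma IsDist.le_sum_mul {p f : α → ℝ} {M : ℝ} (hp : IsDist p) (hf : ∀ a, M ≤ f a) :
    M ≤ ∑ a, p a * f a :=
  calc M = ∑ a, p a * M := by rw [← sum_mul, hp.2, one_mul]
    _ ≤ ∑ a, p a * f a := sum_le_sum fun a _ => mul_le_mul_of_nonneg_left (hf a) (hp.1 a)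

lemma IsDist.abs_sum_mul_le_one {p f : α → ℝ} (hp : IsDist p) (hf : ∀ a, |f a| ≤ 1) :
    |∑ a, p a * f a| ≤ 1 :=
  abs_le.2 ⟨hp.le_sum_mul fun a => (abs_le.1 (hf a)).1, hp.sum_mul_le fun a => (abs_le.1 (hf a)).2⟩

lemma IsDist.nonempty {p : α → ℝ} (hp : IsDist p) : Nonempty α := by
  by_contra h
  rw [not_nonempty_iff] at h
  simpa using hp.2

lemma sum_sub_mul_le_l1 (u v f : α → ℝ) (hf : ∀ a, |f a| ≤ 1) :
    ∑ a, (u a - v a) * f a ≤ l1 u v :=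
  sum_le_sum fun a _ => (le_abs_self _).trans <| by
    rw [abs_mul]; exact mul_le_of_le_one_right (abs_nonneg _) (hf a)

lemma l1_comm (u v : α → ℝ) : l1 u v = l1 v u :=
  sum_congr rfl fun _ _ => abs_sub_comm _ _

lemma convex_setOf_sum_abs_lt (δ : ℝ) : Convex ℝ {x : α → ℝ | ∑ a, |x a| < δ} := by
  refine convex_iff_forall_pos.2 fun x hx y hy s t hs ht hst => ?_
  calc ∑ a, |s * x a + t * y a| ≤ ∑ a, (s * |x a| + t * |y a|) := sum_le_sum fun a _ =>
        (abs_add_le _ _).trans_eq (by rw [abs_mul, abs_mul, abs_of_pos hs, abs_of_pos ht])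
    _ = s * ∑ a, |x a| + t * ∑ a, |y a| := by rw [sum_add_distrib, mul_sum, mul_sum]
    _ < s * δ + t * δ := add_lt_add (mul_lt_mul_of_pos_left hx hs) (mul_lt_mul_of_pos_left hy ht)
    _ = δ := by rw [← add_mul, hst, one_mul]

lemma exists_dual_of_le_sum_abs {W : Set (α → ℝ)} (hW : Convex ℝ W) {δ : ℝ}
    (hδ : ∀ w ∈ W, δ ≤ ∑ a, |w a|) :
    ∃ g : α → ℝ, (∀ a, |g a| ≤ 1) ∧ ∀ w ∈ W, δ ≤ ∑ a, w a * g a := by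
  classical
  rcases le_or_gt δ 0 with hδ0 | hδ0
  · exact ⟨0, by simp, fun w _ => by simpa using hδ0⟩
  obtain ⟨f, r, hfB, hfW⟩ := geometric_hahn_banach_open (convex_setOf_sum_abs_lt δ)
    (isOpen_lt (continuous_finsetSum _ fun a _ => (continuous_apply a).abs) continuous_const) hW
    (Set.disjoint_left.2 fun w hwB hwW => (hδ w hwW).not_gt hwB)
  set γ : α → ℝ := fun a => f fun b => if a = b then 1 else 0
  have hf : ∀ x, f x = ∑ a, x a * γ a := LinearMap.pi_apply_eq_sum_univ (f : (α → ℝ) →ₗ[ℝ] ℝ)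
  have hr : 0 < r := by simpa using hfB 0 (by simpa using hδ0)
  have hγ : ∀ a, δ * |γ a| ≤ r := by
    intro a
    by_contra! h
    have hγa : γ a ≠ 0 := fun h0 => by simp [h0] at h; linarith
    -- a point of the open ball at which `f` takes the value `r`
    have := hfB (fun b => if a = b then r / γ a else 0) (by
      simp only [Set.mem_ofPred_eq, apply_ite abs, abs_zero, sum_ite_eq, mem_univ, if_true]
      rwa [abs_div, abs_of_pos hr, div_lt_iff₀ (abs_pos.2 hγa)])
    simp [hf, hγa] at this
  refine ⟨fun a => δ / r * γ a, fun a => ?_, fun w hw => ?_⟩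
  · rw [abs_mul, abs_of_pos (div_pos hδ0 hr), div_mul_eq_mul_div, div_le_one hr]; exact hγ a
  · have : ∑ a, w a * (δ / r * γ a) = δ / r * f w := by
      rw [hf, mul_sum]; exact sum_congr rfl fun a _ => by ring
    rw [this, div_mul_eq_mul_div, le_div_iff₀ hr]
    exact mul_le_mul_of_nonneg_left (hfW w hw) hδ0.le

end Distributions

section Kernels

variable {α β γ : Type*} [Fintype β]

lemma setOf_isKernel : {q : α → β → ℝ | IsKernel q} = Set.univ.pi fun _ => stdSimplex ℝ β := by
  ext q; simp [IsKernel, IsDist, stdSimplex]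

lemma convex_setOf_isKernel : Convex ℝ {q : α → β → ℝ | IsKernel q} := by
  rw [setOf_isKernel]; exact convex_pi fun _ _ => convex_stdSimplex ℝ β

lemma IsKernel.comp [Fintype γ] {q : α → β → ℝ} {σ : β → γ → ℝ} (hq : IsKernel q)
    (hσ : IsKernel σ) : IsKernel fun a c => ∑ b, q a b * σ b c :=
  fun a => ⟨fun c => sum_nonneg fun b _ => mul_nonneg ((hq a).1 b) ((hσ b).1 c), by
    rw [sum_comm]; simp_rw [← mul_sum, fun b => (hσ b).2, mul_one]; exact (hq a).2⟩

variable [DecidableEq β]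

def detKernel (f : α → β) : α → β → ℝ :=
  fun a b => if b = f a then 1 else 0

lemma isKernel_detKernel (f : α → β) : IsKernel (detKernel f) :=
  fun a => ⟨fun b => by unfold detKernel; split_ifs <;> norm_num, by simp [detKernel]⟩

lemma sum_detKernel_mul (f : α → β) (a : α) (φ : β → ℝ) :
    ∑ b, detKernel f a b * φ b = φ (f a) := by
  simp [detKernel]

end Kernels

lemma abs_sum_strategy_mul_le_one {K C D I J : Type*} [Fintype I] [Fintype J]
    {g : K → I → J → ℝ} {σ : C → I → ℝ} {τ : D → J → ℝ}
    (hg : Bounded1 g) (hσ : IsKernel σ) (hτ : IsKernel τ) (x : K × C × D) :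
    |∑ i, σ x.2.1 i * ∑ j, τ x.2.2 j * g x.1 i j| ≤ 1 :=
  (hσ _).abs_sum_mul_le_one fun _ => (hτ _).abs_sum_mul_le_one fun _ => hg _ _ _

section Games

variable {K C D I J : Type*} [Fintype K] [Fintype C] [Fintype D] [Fintype I] [Fintype J]

lemma sum_triple_eq_sum_mid {β : Type*} [AddCommMonoid β] (f : K × C × D → β) :
    ∑ x, f x = ∑ c, ∑ k, ∑ d, f (k, c, d) := by
  simp only [Fintype.sum_prod_type]; exact sum_comm

lemma sum_triple_eq_sum_last {β : Type*} [AddCommMonoid β] (f : K × C × D → β) :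
    ∑ x, f x = ∑ d, ∑ k, ∑ c, f (k, c, d) := by
  simp only [Fintype.sum_prod_type]; exact sum_comm_cycle

lemma pay_eq_sum (u : K × C × D → ℝ) (g : K → I → J → ℝ) (σ : C → I → ℝ) (τ : D → J → ℝ) :
    pay u g σ τ = ∑ x, u x * ∑ i, σ x.2.1 i * ∑ j, τ x.2.2 j * g x.1 i j := by
  simp only [pay, Fintype.sum_prod_type, mul_sum, mul_assoc]

lemma sum_garbleL_mul {C' : Type*} [Fintype C'] (q : C → C' → ℝ) (u : K × C × D → ℝ)
    (φ : K × C' × D → ℝ) :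
    ∑ x, garbleL q u x * φ x = ∑ x, u x * ∑ c', q x.2.1 c' * φ (x.1, c', x.2.2) := by
  simp only [garbleL, Fintype.sum_prod_type, sum_mul, mul_sum, mul_assoc]
  refine sum_congr rfl fun k _ => ?_
  rw [sum_comm_cycle]
  exact sum_congr rfl fun _ _ => sum_comm

lemma sum_garbleR_mul {D' : Type*} [Fintype D'] (q : D → D' → ℝ) (v : K × C × D → ℝ)
    (φ : K × C × D' → ℝ) :
    ∑ x, garbleR q v x * φ x = ∑ x, v x * ∑ d', q x.2.2 d' * φ (x.1, x.2.1, d') := by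
  simp only [garbleR, Fintype.sum_prod_type, sum_mul, mul_sum, mul_assoc]
  exact sum_congr rfl fun _ _ => sum_congr rfl fun _ _ => sum_comm

lemma isDist_garbleL {C' : Type*} [Fintype C'] {q : C → C' → ℝ} {u : K × C × D → ℝ}
    (hq : IsKernel q) (hu : IsDist u) : IsDist (garbleL q u) := by
  refine ⟨fun x => sum_nonneg fun c _ => mul_nonneg (hu.1 _) ((hq c).1 _), ?_⟩
  simpa [(hq _).2, hu.2] using sum_garbleL_mul q u 1

lemma isDist_garbleR {D' : Type*} [Fintype D'] {q : D → D' → ℝ} {v : K × C × D → ℝ}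
    (hq : IsKernel q) (hv : IsDist v) : IsDist (garbleR q v) := by
  refine ⟨fun x => sum_nonneg fun d _ => mul_nonneg (hv.1 _) ((hq d).1 _), ?_⟩
  simpa [(hq _).2, hv.2] using sum_garbleR_mul q v 1

lemma pay_garbleL {C' : Type*} [Fintype C'] (q : C → C' → ℝ) (u : K × C × D → ℝ)
    (g : K → I → J → ℝ) (σ : C' → I → ℝ) (τ : D → J → ℝ) :
    pay (garbleL q u) g σ τ = pay u g (fun c i => ∑ c', q c c' * σ c' i) τ := by
  rw [pay_eq_sum, pay_eq_sum, sum_garbleL_mul]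
  refine sum_congr rfl fun x _ => congrArg (u x * ·) ?_
  simp only [mul_sum, sum_mul, mul_assoc]
  exact sum_comm_cycle.symm

lemma pay_garbleR {D' : Type*} [Fintype D'] (q : D → D' → ℝ) (v : K × C × D → ℝ)
    (g : K → I → J → ℝ) (σ : C → I → ℝ) (τ : D' → J → ℝ) :
    pay (garbleR q v) g σ τ = pay v g σ (fun d j => ∑ d', q d d' * τ d' j) := by
  rw [pay_eq_sum, pay_eq_sum, sum_garbleR_mul]
  refine sum_congr rfl fun x _ => congrArg (v x * ·) ?_
  simp only [mul_sum, sum_mul, mul_assoc, mul_left_comm (q _ _)]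
  exact sum_comm_cycle.symm

end Games

section Value

variable {K C D I J : Type*} [Fintype K] [Fintype C] [Fintype D] [Fintype I] [Fintype J]
  {u : K × C × D → ℝ} {g : K → I → J → ℝ} {σ : C → I → ℝ}

noncomputable def guarantee (u : K × C × D → ℝ) (g : K → I → J → ℝ) (σ : C → I → ℝ) : ℝ :=
  sInf {y : ℝ | ∃ τ : D → J → ℝ, IsKernel τ ∧ y = pay u g σ τ}

lemma abs_pay_le_one {τ : D → J → ℝ} (hu : IsDist u) (hg : Bounded1 g) (hσ : IsKernel σ)
    (hτ : IsKernel τ) : |pay u g σ τ| ≤ 1 := by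
  rw [pay_eq_sum]
  exact hu.abs_sum_mul_le_one (abs_sum_strategy_mul_le_one hg hσ hτ)

lemma guarantee_le_pay {τ : D → J → ℝ} (hu : IsDist u) (hg : Bounded1 g) (hσ : IsKernel σ)
    (hτ : IsKernel τ) : guarantee u g σ ≤ pay u g σ τ :=
  csInf_le ⟨-1, by rintro _ ⟨τ', hτ', rfl⟩; exact (abs_le.1 (abs_pay_le_one hu hg hσ hτ')).1⟩
    ⟨τ, hτ, rfl⟩

lemma le_guarantee [Nonempty J] {L : ℝ} (h : ∀ τ : D → J → ℝ, IsKernel τ → L ≤ pay u g σ τ) :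
    L ≤ guarantee u g σ := by
  classical
  exact le_csInf ⟨_, _, isKernel_detKernel fun _ => Classical.arbitrary J, rfl⟩
    (by rintro _ ⟨τ, hτ, rfl⟩; exact h τ hτ)

lemma guarantee_le_gameVal [Nonempty J] (hu : IsDist u) (hg : Bounded1 g) (hσ : IsKernel σ) :
    guarantee u g σ ≤ gameVal u g := by
  classical
  have hτ := isKernel_detKernel (α := D) fun _ => Classical.arbitrary J
  refine le_csSup ⟨1, ?_⟩ ⟨σ, hσ, rfl⟩
  rintro _ ⟨σ', hσ', rfl⟩
  exact (guarantee_le_pay hu hg hσ' hτ).trans (abs_le.1 (abs_pay_le_one hu hg hσ' hτ)).2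

lemma gameVal_le [Nonempty I] {U : ℝ} (h : ∀ σ : C → I → ℝ, IsKernel σ → guarantee u g σ ≤ U) :
    gameVal u g ≤ U := by
  classical
  exact csSup_le ⟨_, _, isKernel_detKernel fun _ => Classical.arbitrary I, rfl⟩
    (by rintro _ ⟨σ, hσ, rfl⟩; exact h σ hσ)

lemma gameVal_le_gameVal_add_l1 [Nonempty I] [Nonempty J] {a b : K × C × D → ℝ}
    (ha : IsDist a) (hb : IsDist b) (hg : Bounded1 g) : gameVal b g ≤ gameVal a g + l1 b a := by
  refine gameVal_le fun σ hσ => ?_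
  have : guarantee b g σ - l1 b a ≤ guarantee a g σ := le_guarantee fun τ hτ => by
    have hgap : pay b g σ τ - pay a g σ τ ≤ l1 b a := by
      rw [pay_eq_sum, pay_eq_sum, ← sum_sub_distrib]
      simp only [← sub_mul]
      exact sum_sub_mul_le_l1 b a _ (abs_sum_strategy_mul_le_one hg hσ hτ)
    linarith [guarantee_le_pay hb hg hσ hτ]
  linarith [guarantee_le_gameVal ha hg hσ]

lemma gameVal_garbleL_le [Nonempty I] [Nonempty J] {C' : Type*} [Fintype C'] {q : C → C' → ℝ}
    (hq : IsKernel q) (hu : IsDist u) (hg : Bounded1 g) :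
    gameVal (garbleL q u) g ≤ gameVal u g :=
  gameVal_le fun σ hσ => by
    have : guarantee (garbleL q u) g σ = guarantee u g fun c i => ∑ c', q c c' * σ c' i := by
      simp only [guarantee, pay_garbleL]
    exact this ▸ guarantee_le_gameVal hu hg (hq.comp hσ)

lemma gameVal_le_gameVal_garbleR [Nonempty I] [Nonempty J] {D' : Type*} [Fintype D']
    {q : D → D' → ℝ} {v : K × C × D → ℝ} (hq : IsKernel q) (hv : IsDist v) (hg : Bounded1 g) :
    gameVal v g ≤ gameVal (garbleR q v) g :=
  gameVal_le fun σ hσ =>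
    (le_guarantee fun τ hτ => pay_garbleR q v g σ τ ▸ guarantee_le_pay hv hg hσ (hq.comp hτ)).trans
      (guarantee_le_gameVal (isDist_garbleR hq hv) hg hσ)

lemma gameVal_le_of_bestReply [Nonempty I] [DecidableEq J] {u : K × C × D → ℝ} (hu : IsDist u)
    {G : K × C × D → ℝ} (hG : ∀ x, |G x| ≤ 1) (eC : I ≃ C) (eD : J ≃ D) {ψ : C → C}
    (hψ : ∀ c c', ∑ k, ∑ d, u (k, c, d) * G (k, c', d) ≤ ∑ k, ∑ d, u (k, c, d) * G (k, ψ c, d)) :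
    gameVal u (fun k i j => G (k, eC i, eD j)) ≤ ∑ x, u x * G (x.1, ψ x.2.1, x.2.2) := by
  refine gameVal_le fun σ hσ =>
    (guarantee_le_pay hu (fun _ _ _ => hG _) hσ (isKernel_detKernel eD.symm)).trans ?_
  rw [pay_eq_sum]
  simp only [sum_detKernel_mul, Equiv.apply_symm_apply]
  rw [sum_triple_eq_sum_mid, sum_triple_eq_sum_mid]
  refine sum_le_sum fun c _ => ?_
  calc ∑ k, ∑ d, u (k, c, d) * ∑ i, σ c i * G (k, eC i, d)
      = ∑ i, σ c i * ∑ k, ∑ d, u (k, c, d) * G (k, eC i, d) := by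
        simp only [mul_sum, mul_left_comm (u _)]
        exact sum_comm_cycle
    _ ≤ _ := (hσ c).sum_mul_le fun i => hψ c (eC i)

lemma le_gameVal_of_bestReply [Nonempty J] [DecidableEq I] {v : K × C × D → ℝ} (hv : IsDist v)
    {G : K × C × D → ℝ} (hG : ∀ x, |G x| ≤ 1) (eC : I ≃ C) (eD : J ≃ D) {φ : D → D}
    (hφ : ∀ d d', ∑ k, ∑ c, v (k, c, d) * G (k, c, φ d) ≤ ∑ k, ∑ c, v (k, c, d) * G (k, c, d')) :
    ∑ x, v x * G (x.1, x.2.1, φ x.2.2) ≤ gameVal v (fun k i j => G (k, eC i, eD j)) := by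
  refine le_trans (le_guarantee fun τ hτ => ?_)
    (guarantee_le_gameVal hv (fun _ _ _ => hG _) (isKernel_detKernel eC.symm))
  rw [pay_eq_sum]
  simp only [sum_detKernel_mul, Equiv.apply_symm_apply]
  rw [sum_triple_eq_sum_last, sum_triple_eq_sum_last]
  refine sum_le_sum fun d _ => ?_
  calc _ ≤ ∑ j, τ d j * ∑ k, ∑ c, v (k, c, d) * G (k, c, eD j) :=
        (hτ d).le_sum_mul fun j => hφ d (eD j)
    _ = ∑ k, ∑ c, v (k, c, d) * ∑ j, τ d j * G (k, c, eD j) := by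
        simp only [mul_sum, mul_left_comm (τ _ _)]
        exact sum_comm_cycle.symm

end Value

lemma convex_garbleL_sub_garbleR {K C D : Type*} [Fintype C] [Fintype D] (u v : K × C × D → ℝ) :
    Convex ℝ ((fun q : (C → C → ℝ) × (D → D → ℝ) => garbleL q.1 u - garbleR q.2 v) ''
      ({q | IsKernel q} ×ˢ {q | IsKernel q})) := by
  refine (convex_setOf_isKernel.prod convex_setOf_isKernel).is_linear_image
    ⟨fun q q' => funext fun x => ?_, fun s q => funext fun x => ?_⟩
  · simp only [garbleL, garbleR, Prod.fst_add, Prod.snd_add, Pi.add_apply, Pi.sub_apply, mul_add,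
      sum_add_distrib]
    ring
  · simp only [garbleL, garbleR, Prod.smul_fst, Prod.smul_snd, Pi.smul_apply, Pi.sub_apply,
      smul_eq_mul, mul_sub, mul_sum, mul_left_comm s]

section Main

variable {K C D : Type*} [Fintype K] [Fintype C] [Fintype D]

noncomputable def prefDist (u v : K × C × D → ℝ) : ℝ :=
  sInf {x : ℝ | ∃ u' v' : K × C × D → ℝ, IsDist u' ∧ IsDist v' ∧
    Pref u u' ∧ Pref v' v ∧ x = l1 u' v'}

lemma sub_gameVal_le_prefDist {u v : K × C × D → ℝ} (hu : IsDist u) (hv : IsDist v) {m n : ℕ}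
    {g : K → Fin (m + 1) → Fin (n + 1) → ℝ} (hg : Bounded1 g) :
    gameVal v g - gameVal u g ≤ prefDist u v := by
  refine le_csInf ⟨l1 u v, u, v, hu, hv, fun _ _ _ _ => le_rfl, fun _ _ _ _ => le_rfl, rfl⟩ ?_
  rintro _ ⟨u', v', hu', hv', hpu, hpv, rfl⟩
  linarith [hpu m n g hg, hpv m n g hg, l1_comm u' v' ▸ gameVal_le_gameVal_add_l1 hu' hv' hg]

lemma exists_game_sum_garble_sub_mul_le {u v : K × C × D → ℝ} (hu : IsDist u) (hv : IsDist v)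
    {g : K × C × D → ℝ} (hg : ∀ x, |g x| ≤ 1) :
    ∃ (q₁ : C → C → ℝ) (q₂ : D → D → ℝ), IsKernel q₁ ∧ IsKernel q₂ ∧
      ∃ (m n : ℕ) (H : K → Fin (m + 1) → Fin (n + 1) → ℝ), Bounded1 H ∧
        ∑ x, (garbleL q₁ u x - garbleR q₂ v x) * g x ≤ gameVal v H - gameVal u H := by
  classical
  obtain ⟨_, c₀, d₀⟩ := hu.nonempty.some
  have : Nonempty C := ⟨c₀⟩
  have : Nonempty D := ⟨d₀⟩
  obtain ⟨m, hm⟩ := Nat.exists_eq_succ_of_ne_zero (Fintype.card_ne_zero (α := C))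
  obtain ⟨n, hn⟩ := Nat.exists_eq_succ_of_ne_zero (Fintype.card_ne_zero (α := D))
  let eC : Fin (m + 1) ≃ C := (Fintype.equivFinOfCardEq hm).symm
  let eD : Fin (n + 1) ≃ D := (Fintype.equivFinOfCardEq hn).symm
  choose ψ hψ using fun c => Finite.exists_max fun c' => ∑ k, ∑ d, u (k, c, d) * -g (k, c', d)
  choose φ hφ using fun d => Finite.exists_min fun d' => ∑ k, ∑ c, v (k, c, d) * -g (k, c, d')
  have hG : ∀ x, |-g x| ≤ 1 := fun x => (abs_neg _).trans_le (hg x)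
  have hu' := gameVal_le_of_bestReply hu hG eC eD hψ
  have hv' := le_gameVal_of_bestReply hv hG eC eD hφ
  refine ⟨detKernel ψ, detKernel φ, isKernel_detKernel ψ, isKernel_detKernel φ, m, n,
    fun k i j => -g (k, eC i, eD j), fun k i j => hG _, ?_⟩
  simp only [sub_mul, sum_sub_distrib, sum_garbleL_mul, sum_garbleR_mul, sum_detKernel_mul]
  simp only [mul_neg, sum_neg_distrib] at hu' hv'
  linarith

lemma exists_game_prefDist_le {u v : K × C × D → ℝ} (hu : IsDist u) (hv : IsDist v) :
    ∃ (m n : ℕ) (H : K → Fin (m + 1) → Fin (n + 1) → ℝ), Bounded1 H ∧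
      prefDist u v ≤ gameVal v H - gameVal u H := by
  obtain ⟨g, hg, hgW⟩ := exists_dual_of_le_sum_abs (convex_garbleL_sub_garbleR u v)
    (δ := prefDist u v) <| by
      rintro _ ⟨⟨q₁, q₂⟩, ⟨hq₁, hq₂⟩, rfl⟩
      refine csInf_le ⟨0, ?_⟩ ⟨_, _, isDist_garbleL hq₁ hu, isDist_garbleR hq₂ hv,
        fun _ _ _ hg => gameVal_garbleL_le hq₁ hu hg,
        fun _ _ _ hg => gameVal_le_gameVal_garbleR hq₂ hv hg, rfl⟩
      rintro _ ⟨_, _, _, _, _, _, rfl⟩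
      exact sum_nonneg fun _ _ => abs_nonneg _
  obtain ⟨q₁, q₂, hq₁, hq₂, m, n, H, hH, hle⟩ := exists_game_sum_garble_sub_mul_le hu hv hg
  exact ⟨m, n, H, hH, (hgW _ ⟨(q₁, q₂), ⟨hq₁, hq₂⟩, rfl⟩).trans hle⟩

end Main

theorem stmt19 {K C D : Type*} [Fintype K] [Fintype C] [Fintype D]
    (u v : K × C × D → ℝ) (hu : IsDist u) (hv : IsDist v) :
    sSup {x : ℝ | ∃ (m n : ℕ) (g : K → Fin (m + 1) → Fin (n + 1) → ℝ), Bounded1 g ∧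
        x = gameVal v g - gameVal u g}
      = sInf {x : ℝ | ∃ u' v' : K × C × D → ℝ, IsDist u' ∧ IsDist v' ∧
          Pref u u' ∧ Pref v' v ∧ x = l1 u' v'} := by
  obtain ⟨m, n, H, hH, hle⟩ := exists_game_prefDist_le hu hv
  refine le_antisymm (csSup_le ⟨_, 0, 0, fun _ _ _ => 0, fun _ _ _ => by simp, rfl⟩ ?_)
    (hle.trans (le_csSup ⟨prefDist u v, ?_⟩ ⟨m, n, H, hH, rfl⟩))
  all_goals
    rintro _ ⟨_, _, g, hg, rfl⟩
    exact sub_gameVal_le_prefDist hu hv hg
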